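/- Suppose G has at least one X–Y separator, and let r be the minimum size of an X–Y separator of G. Then there is exactly one important X–Y separator of G of size r. -/

import Mathlib

variable {V : Type*}

/-- `K` is an `X`–`Y` separator of `G`: `K` avoids `X ∪ Y` and every walk
from a vertex of `X` to a vertex of `Y` meets `K` (i.e. there is no
`X`–`Y` path in `G \ K`). -/
def IsSeparator (G : SimpleGraph V) (X Y K : Set V) : Prop :=
  K ⊆ (X ∪ Y)ᶜ ∧
  ∀ x ∈ X, ∀ y ∈ Y, ∀ w : G.Walk x y, ∃ v ∈ w.support, v ∈ K

/-- `NR G A B`: the vertices of `G \ B` that are not reachable from `A` in `G \ B`. -/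
def NR (G : SimpleGraph V) (A B : Set V) : Set V :=
  {v | v ∉ B ∧ ¬ ∃ a ∈ A, ∃ w : G.Walk a v, ∀ x ∈ w.support, x ∉ B}

/-- `Reach G A B`: the vertices reachable from `A` in `G \ B`. -/
def Reach (G : SimpleGraph V) (A B : Set V) : Set V :=
  {v | ∃ a ∈ A, ∃ w : G.Walk a v, ∀ x ∈ w.support, x ∉ B}

/-- The order on `X`–`Y` separators: `K1 ≤ K2` iff `NR(G,Y,K1) ⊆ NR(G,Y,K2)`. -/
def SepLE (G : SimpleGraph V) (Y K1 K2 : Set V) : Prop :=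
  NR G Y K1 ⊆ NR G Y K2

/-- The strict order on `X`–`Y` separators. -/
def SepLT (G : SimpleGraph V) (Y K1 K2 : Set V) : Prop :=
  NR G Y K1 ⊆ NR G Y K2 ∧ NR G Y K1 ≠ NR G Y K2

/-- A minimal `X`–`Y` separator: no proper subset is an `X`–`Y` separator. -/
def IsMinimalSeparator (G : SimpleGraph V) (X Y K : Set V) : Prop :=
  IsSeparator G X Y K ∧ ∀ K' ⊂ K, ¬ IsSeparator G X Y K'

/-- An important `X`–`Y` separator: a minimal separator `K` such that there is
no separator `K'` with `K < K'` and `|K'| ≤ |K|`. -/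
def IsImportantSeparator (G : SimpleGraph V) (X Y K : Set V) : Prop :=
  IsMinimalSeparator G X Y K ∧
  ¬ ∃ K', IsSeparator G X Y K' ∧ SepLT G Y K K' ∧ K'.ncard ≤ K.ncard

/-- The minimum size of an `X`–`Y` separator of `G`. -/
noncomputable def minSepSize (G : SimpleGraph V) (X Y : Set V) : ℕ :=
  sInf {n | ∃ K, IsSeparator G X Y K ∧ K.ncard = n}

/-- The excess of a separator: its size minus the minimum separator size. -/
noncomputable def excess (G : SimpleGraph V) (X Y K : Set V) : ℕ :=
  K.ncard - minSepSize G X Y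

/-- The graph `Pr(G,X,Y,K)`: the vertices `NR(G,Y,K) \ X` are deleted (here:
made isolated), and every vertex of `X` is made adjacent to every vertex of `K`. -/
def PrGraph (G : SimpleGraph V) (X Y K : Set V) : SimpleGraph V where
  Adj u v := u ≠ v ∧ u ∉ NR G Y K \ X ∧ v ∉ NR G Y K \ X ∧
    (G.Adj u v ∨ (u ∈ X ∧ v ∈ K) ∨ (u ∈ K ∧ v ∈ X))
  symm := by
    constructor
    rintro u v ⟨h1, h2, h3, h4⟩
    refine ⟨h1.symm, h3, h2, ?_⟩
    rcases h4 with h | h | h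
    · exact Or.inl h.symm
    · exact Or.inr (Or.inr ⟨h.2, h.1⟩)
    · exact Or.inr (Or.inl ⟨h.2, h.1⟩)
  loopless := by constructor; rintro v ⟨h1, -⟩; exact h1 rfl

/-- `NSet G X` is `N(X)`: the set of vertices outside `X` adjacent to a vertex of `X`. -/
def NSet (G : SimpleGraph V) (X : Set V) : Set V :=
  {v | v ∉ X ∧ ∃ x ∈ X, G.Adj x v}

/-- `G` is `X`–`Y` normalized: `N(X)` is an `X`–`Y` separator and is
the unique smallest `X`–`Y` separator. -/
def Normalized (G : SimpleGraph V) (X Y : Set V) : Prop :=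
  IsSeparator G X Y (NSet G X) ∧
  ∀ K, IsSeparator G X Y K → K ≠ NSet G X → (NSet G X).ncard < K.ncard

/-- The cover excess `CE(S)`: the minimum excess of an `X`–`Y` separator disjoint from `S`. -/
noncomputable def CE (G : SimpleGraph V) (X Y S : Set V) : ℕ :=
  sInf {n | ∃ K, IsSeparator G X Y K ∧ Disjoint K S ∧ excess G X Y K = n}

/-- A witness of `S`: an `X`–`Y` separator disjoint from `S` whose excess equals `CE(S)`. -/
noncomputable def IsWitness (G : SimpleGraph V) (X Y S K : Set V) : Prop :=
  IsSeparator G X Y K ∧ Disjoint K S ∧ excess G X Y K = CE G X Y S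

/-- An important witness of `S`: a witness of `S` that is an important `X`–`Y` separator. -/
noncomputable def IsImportantWitness (G : SimpleGraph V) (X Y S K : Set V) : Prop :=
  IsWitness G X Y S K ∧ IsImportantSeparator G X Y K

/-!
A minimum separator `K` maximising `|NR(Y,K)|` is important. Conversely, let `K₁, K₂` be important
of minimum size `r` and let `Rᵢ` be the set reached from `Y` in `G \ Kᵢ`, so that `N(Rᵢ) ⊆ Kᵢ`.
Both `N(R₁ ∪ R₂)` and `N(R₁ ∩ R₂)` are separators, so submodularity of `|N(·)|` gives
`|N(R₁ ∩ R₂)| ≤ r`. Since `N(R₁ ∩ R₂)` lies above both `K₁` and `K₂`, importance forces all three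
to have the same `NR`-set; and a minimal separator is determined by its `NR`-set, since each of
its vertices has a neighbour in it.
-/

section Reach

variable {G : SimpleGraph V} {A B Z : Set V} {u v : V}

lemma mem_reach_of_adj (hu : u ∈ Reach G A B) (hadj : G.Adj u v) (hv : v ∉ B) :
    v ∈ Reach G A B := by
  obtain ⟨a, ha, w, hw⟩ := hu
  refine ⟨a, ha, w.concat hadj, fun x hx => ?_⟩
  rw [SimpleGraph.Walk.support_concat, List.mem_append, List.mem_singleton] at hx
  rcases hx with hx | rfl
  · exact hw x hx
  · exact hv

lemma self_subset_reach (hAB : Disjoint A B) : A ⊆ Reach G A B := fun a ha =>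
  ⟨a, ha, .nil, by simpa using Set.disjoint_left.1 hAB ha⟩

lemma nset_reach_subset : NSet G (Reach G A B) ⊆ B := by
  rintro v ⟨hvR, u, huR, hadj⟩
  by_contra hvB
  exact hvR (mem_reach_of_adj huR hadj hvB)

lemma exists_mem_support_mem_nset (w : G.Walk u v) (hu : u ∈ Z) (hv : v ∉ Z) :
    ∃ x ∈ w.support, x ∈ NSet G Z := by
  obtain ⟨d, hd, hfst, hsnd⟩ := w.exists_boundary_dart Z hu hv
  exact ⟨d.snd, w.dart_snd_mem_support_of_mem_darts hd, hsnd, d.fst, hfst, d.adj⟩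

lemma reach_nset_subset (hAZ : A ⊆ Z) : Reach G A (NSet G Z) ⊆ Z := by
  rintro v ⟨a, ha, w, hw⟩
  by_contra hv
  obtain ⟨x, hx, hxN⟩ := exists_mem_support_mem_nset w (hAZ ha) hv
  exact hw x hx hxN

lemma NR_subset_NR_nset (hAZ : A ⊆ Z) (hZ : Z ⊆ Reach G A B) :
    NR G A B ⊆ NR G A (NSet G Z) := by
  rintro v ⟨hvB, hvR⟩
  refine ⟨?_, fun hv => hvR (hZ (reach_nset_subset hAZ hv))⟩
  rintro ⟨-, z, hz, hadj⟩
  exact hvR (mem_reach_of_adj (hZ hz) hadj hvB)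

end Reach

section NSet

variable {G : SimpleGraph V} {A B : Set V}

lemma nset_union_subset : NSet G (A ∪ B) ⊆ NSet G A ∪ NSet G B := by
  rintro v ⟨hv, u, hu | hu, hadj⟩
  · exact Or.inl ⟨fun h => hv (Or.inl h), u, hu, hadj⟩
  · exact Or.inr ⟨fun h => hv (Or.inr h), u, hu, hadj⟩

lemma nset_inter_subset : NSet G (A ∩ B) ⊆ NSet G A ∪ NSet G B := by
  rintro v ⟨hv, u, ⟨huA, huB⟩, hadj⟩
  by_cases hvA : v ∈ A
  · exact Or.inr ⟨fun h => hv ⟨hvA, h⟩, u, huB, hadj⟩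
  · exact Or.inl ⟨hvA, u, huA, hadj⟩

lemma nset_union_inter_nset_inter_subset :
    NSet G (A ∪ B) ∩ NSet G (A ∩ B) ⊆ NSet G A ∩ NSet G B := by
  rintro v ⟨⟨hv, -⟩, -, u, ⟨huA, huB⟩, hadj⟩
  exact ⟨⟨fun h => hv (Or.inl h), u, huA, hadj⟩, ⟨fun h => hv (Or.inr h), u, huB, hadj⟩⟩

lemma ncard_nset_union_add_ncard_nset_inter_le [Finite V] :
    (NSet G (A ∪ B)).ncard + (NSet G (A ∩ B)).ncard ≤ (NSet G A).ncard + (NSet G B).ncard :=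
  calc (NSet G (A ∪ B)).ncard + (NSet G (A ∩ B)).ncard
      = (NSet G (A ∪ B) ∪ NSet G (A ∩ B)).ncard +
          (NSet G (A ∪ B) ∩ NSet G (A ∩ B)).ncard :=
        (Set.ncard_union_add_ncard_inter _ _).symm
    _ ≤ (NSet G A ∪ NSet G B).ncard + (NSet G A ∩ NSet G B).ncard :=
        add_le_add (Set.ncard_le_ncard (Set.union_subset nset_union_subset nset_inter_subset))
          (Set.ncard_le_ncard nset_union_inter_nset_inter_subset)
    _ = (NSet G A).ncard + (NSet G B).ncard := Set.ncard_union_add_ncard_inter _ _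

end NSet

section Separator

variable {G : SimpleGraph V} {X Y K K₁ K₂ Z : Set V} {v : V}

lemma IsSeparator.of_nset_subset (hYZ : Y ⊆ Z) (hXZ : Disjoint X Z) (hZK : NSet G Z ⊆ K)
    (hK : K ⊆ (X ∪ Y)ᶜ) : IsSeparator G X Y K := by
  refine ⟨hK, fun x hx y hy w => ?_⟩
  obtain ⟨v, hv, hvN⟩ :=
    exists_mem_support_mem_nset w.reverse (hYZ hy) (Set.disjoint_left.1 hXZ hx)
  rw [SimpleGraph.Walk.support_reverse, List.mem_reverse] at hv
  exact ⟨v, hv, hZK hvN⟩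

lemma IsSeparator.subset_reach (hK : IsSeparator G X Y K) : Y ⊆ Reach G Y K :=
  self_subset_reach (Set.disjoint_right.2 fun _ hvK hvY => hK.1 hvK (Or.inr hvY))

lemma IsSeparator.disjoint_reach (hK : IsSeparator G X Y K) : Disjoint X (Reach G Y K) := by
  refine Set.disjoint_left.2 fun x hx ⟨y, hy, w, hw⟩ => ?_
  obtain ⟨v, hv, hvK⟩ := hK.2 x hx y hy w.reverse
  exact hw v (List.mem_reverse.1 (w.support_reverse ▸ hv)) hvK

/-- If `v ∈ K` had no neighbour in `NR(Y,K)`, then adding `v` to the part reached from `Y`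
would leave `K \ {v}` as its neighbourhood, so `K \ {v}` would already separate. -/
lemma IsMinimalSeparator.exists_adj_mem_NR (hK : IsMinimalSeparator G X Y K) (hv : v ∈ K) :
    ∃ u, G.Adj v u ∧ u ∈ NR G Y K := by
  by_contra! hNR
  refine hK.2 (K \ {v}) (Set.sdiff_singleton_ssubset.2 hv)
    (.of_nset_subset (Z := insert v (Reach G Y K)) ?_ ?_ ?_ (Set.sdiff_subset.trans hK.1.1))
  · exact hK.1.subset_reach.trans (Set.subset_insert _ _)
  · exact Set.disjoint_insert_right.2 ⟨fun hvX => hK.1.1 hv (Or.inl hvX), hK.1.disjoint_reach⟩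
  · rintro u ⟨hu, z, hz, hadj⟩
    rw [Set.mem_insert_iff, not_or] at hu
    refine ⟨?_, hu.1⟩
    by_contra huK
    rcases hz with rfl | hz
    · exact hNR u hadj ⟨huK, hu.2⟩
    · exact hu.2 (mem_reach_of_adj hz hadj huK)

lemma IsMinimalSeparator.subset_of_NR_eq {K' : Set V} (hK : IsMinimalSeparator G X Y K)
    (h : NR G Y K' = NR G Y K) : K ⊆ K' := by
  intro v hv
  obtain ⟨u, hadj, hu⟩ := hK.exists_adj_mem_NR hv
  rw [← h] at hu
  by_contra hvK'
  have hvR : v ∈ Reach G Y K' := by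
    by_contra hvR
    have hvNR : v ∈ NR G Y K' := ⟨hvK', hvR⟩
    exact (h ▸ hvNR).1 hv
  exact hu.2 (mem_reach_of_adj hvR hadj hu.1)

lemma IsMinimalSeparator.eq_of_NR_eq (h₁ : IsMinimalSeparator G X Y K₁)
    (h₂ : IsMinimalSeparator G X Y K₂) (h : NR G Y K₁ = NR G Y K₂) : K₁ = K₂ :=
  (h₁.subset_of_NR_eq h.symm).antisymm (h₂.subset_of_NR_eq h)

lemma minSepSize_le (hK : IsSeparator G X Y K) : minSepSize G X Y ≤ K.ncard :=
  Nat.sInf_le ⟨K, hK, rfl⟩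

lemma exists_isSeparator_ncard_eq_minSepSize (hex : ∃ K, IsSeparator G X Y K) :
    ∃ K, IsSeparator G X Y K ∧ K.ncard = minSepSize G X Y :=
  let ⟨K, hK⟩ := hex
  Nat.sInf_mem (s := {n | ∃ K, IsSeparator G X Y K ∧ K.ncard = n}) ⟨K.ncard, K, hK, rfl⟩

lemma IsSeparator.isMinimalSeparator [Finite V] (hK : IsSeparator G X Y K)
    (hr : K.ncard = minSepSize G X Y) : IsMinimalSeparator G X Y K :=
  ⟨hK, fun _ hK' hsep => (Set.ncard_lt_ncard hK').not_ge (hr ▸ minSepSize_le hsep)⟩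

lemma IsImportantSeparator.NR_eq_of_le {K' : Set V} (hK : IsImportantSeparator G X Y K)
    (hK' : IsSeparator G X Y K') (hle : NR G Y K ⊆ NR G Y K') (hcard : K'.ncard ≤ K.ncard) :
    NR G Y K = NR G Y K' := by
  by_contra hne
  exact hK.2 ⟨K', hK', ⟨hle, hne⟩, hcard⟩

lemma exists_isImportantSeparator_ncard_eq_minSepSize [Finite V]
    (hex : ∃ K, IsSeparator G X Y K) :
    ∃ K, IsImportantSeparator G X Y K ∧ K.ncard = minSepSize G X Y := by
  obtain ⟨K, ⟨hK, hKr⟩, hmax⟩ :=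
    Set.exists_max_image {K | IsSeparator G X Y K ∧ K.ncard = minSepSize G X Y}
      (fun K => (NR G Y K).ncard) (Set.toFinite _) (exists_isSeparator_ncard_eq_minSepSize hex)
  refine ⟨K, ⟨hK.isMinimalSeparator hKr, ?_⟩, hKr⟩
  rintro ⟨K', hK', ⟨hle, hne⟩, hcard⟩
  have hK'r : K'.ncard = minSepSize G X Y := (hcard.trans_eq hKr).antisymm (minSepSize_le hK')
  exact (Set.ncard_lt_ncard (hle.ssubset_of_ne hne)).not_ge (hmax K' ⟨hK', hK'r⟩)

lemma IsImportantSeparator.eq_of_ncard_eq_minSepSize [Finite V]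
    (h₁ : IsImportantSeparator G X Y K₁) (h₂ : IsImportantSeparator G X Y K₂)
    (s₁ : K₁.ncard = minSepSize G X Y) (s₂ : K₂.ncard = minSepSize G X Y) : K₁ = K₂ := by
  set R₁ := Reach G Y K₁
  set R₂ := Reach G Y K₂
  have hY : Y ⊆ R₁ ∩ R₂ := Set.subset_inter h₁.1.1.subset_reach h₂.1.1.subset_reach
  have hN₁ : NSet G R₁ ⊆ K₁ := nset_reach_subset
  have hN₂ : NSet G R₂ ⊆ K₂ := nset_reach_subset
  have hN : NSet G R₁ ∪ NSet G R₂ ⊆ (X ∪ Y)ᶜ :=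
    Set.union_subset (hN₁.trans h₁.1.1.1) (hN₂.trans h₂.1.1.1)
  have sep_inter : IsSeparator G X Y (NSet G (R₁ ∩ R₂)) :=
    .of_nset_subset hY (h₁.1.1.disjoint_reach.mono_right Set.inter_subset_left) subset_rfl
      (nset_inter_subset.trans hN)
  have sep_union : IsSeparator G X Y (NSet G (R₁ ∪ R₂)) :=
    .of_nset_subset (hY.trans (Set.inter_subset_left.trans Set.subset_union_left))
      (Set.disjoint_union_right.2 ⟨h₁.1.1.disjoint_reach, h₂.1.1.disjoint_reach⟩) subset_rfl
      (nset_union_subset.trans hN)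
  have hcard : (NSet G (R₁ ∩ R₂)).ncard ≤ minSepSize G X Y := by
    have := ncard_nset_union_add_ncard_nset_inter_le (G := G) (A := R₁) (B := R₂)
    have := minSepSize_le sep_union
    have := Set.ncard_le_ncard hN₁
    have := Set.ncard_le_ncard hN₂
    omega
  have e₁ := h₁.NR_eq_of_le sep_inter (NR_subset_NR_nset hY Set.inter_subset_left) (s₁ ▸ hcard)
  have e₂ := h₂.NR_eq_of_le sep_inter (NR_subset_NR_nset hY Set.inter_subset_right) (s₂ ▸ hcard)
  exact h₁.1.eq_of_NR_eq h₂.1 (e₁.trans e₂.symm)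

end Separator

theorem existsUnique_smallest_important_separator_general
    {V : Type*} [Fintype V] (G : SimpleGraph V) (X Y : Set V)
    (hex : ∃ K, IsSeparator G X Y K) :
    ∃! K : Set V, IsImportantSeparator G X Y K ∧ K.ncard = minSepSize G X Y := by
  obtain ⟨K, hK, hKr⟩ := exists_isImportantSeparator_ncard_eq_minSepSize (G := G) hex
  exact ⟨K, ⟨hK, hKr⟩, fun K' ⟨hK', hK'r⟩ => hK'.eq_of_ncard_eq_minSepSize hK hK'r hKr⟩

/-- Suppose `G` has at least one `X`–`Y` separator and let `r`
be the minimum size of an `X`–`Y` separator of `G`.  Then there is exactly one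
important `X`–`Y` separator of `G` of size `r`. -/
theorem existsUnique_smallest_important_separator
    {V : Type*} [Fintype V] (G : SimpleGraph V) (X Y : Set V)
    (hXY : Disjoint X Y) (hex : ∃ K, IsSeparator G X Y K) :
    ∃! K : Set V, IsImportantSeparator G X Y K ∧ K.ncard = minSepSize G X Y :=
  existsUnique_smallest_important_separator_general G X Y hex
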